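/- arXiv:1708.06892 — 4 statements merged into one kernel-verified Lean document; each statement's English description precedes it below -/
import Mathlib

section
/- Let alpha in Z^n satisfy: entries are nonzero distinct elements of {1,...,2n} and alpha_i + alpha_j != 2n+1 for all i,j. Let C be any set of integer vectors c in Z^n with c·alpha ≡ 0 (mod 2n+1). Then any two distinct codewords c1, c2 in C satisfy ||c1 - c2|| >= 3, i.e., C has minimum L1-distance at least 3. -/
lemma key_mult (m k S : ℤ) (hm : 0 < m) (hS : S = m * k)
    (hb1 : -(2*m) < S) (hb2 : S < 2*m) : S = 0 ∨ S = m ∨ S = -m := by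
  have hk1 : k < 2 := by nlinarith
  have hk2 : -2 < k := by nlinarith
  interval_cases k <;> simp_all

/-- If `α` has nonzero distinct entries in `{1,…,2n}` with `α_i + α_j ≠ 2n+1`, and
`C` is a set of integer vectors `c` with `c·α ≡ 0 (mod 2n+1)`, then any two distinct
codewords of `C` are at `L₁`-distance at least 3. -/
theorem min_L1_distance_three (n : ℕ) (α : Fin n → ℤ)
    (hrange : ∀ i, 1 ≤ α i ∧ α i ≤ 2 * n)
    (hinj : Function.Injective α)
    (hsum : ∀ i j, α i + α j ≠ 2 * n + 1)
    (C : Set (Fin n → ℤ))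
    (hC : ∀ c ∈ C, (2 * (n : ℤ) + 1) ∣ ∑ j, c j * α j)
    (c1 c2 : Fin n → ℤ) (h1 : c1 ∈ C) (h2 : c2 ∈ C) (hne : c1 ≠ c2) :
    3 ≤ ∑ j, (c1 j - c2 j).natAbs := by
  by_contra hlt
  push_neg at hlt
  set d : Fin n → ℤ := fun j => c1 j - c2 j with hd
  have hdvd : (2*(n:ℤ)+1) ∣ ∑ j, d j * α j := by
    have := dvd_sub (hC c1 h1) (hC c2 h2)
    simpa [hd, sub_mul, Finset.sum_sub_distrib] using this
  have hdne : ∃ i, d i ≠ 0 := by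
    by_contra h; push_neg at h
    exact hne (funext fun j => by have := h j; simp [hd] at this; omega)
  have hsum2 : ∑ j, (d j).natAbs ≤ 2 := by simp only [hd]; omega
  set s := Finset.univ.filter (fun j => d j ≠ 0) with hs
  have hmem : ∀ j, j ∈ s ↔ d j ≠ 0 := by intro j; simp [hs]
  have hcard : s.card ≤ 2 := by
    calc s.card = ∑ j ∈ s, 1 := by simp
    _ ≤ ∑ j ∈ s, (d j).natAbs := Finset.sum_le_sum (fun j hj => by
        have := (hmem j).1 hj; omega)
    _ ≤ ∑ j, (d j).natAbs := Finset.sum_le_sum_of_subset (Finset.subset_univ s)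
    _ ≤ 2 := hsum2
  have hsumeq : ∑ j, d j * α j = ∑ j ∈ s, d j * α j := by
    refine (Finset.sum_subset (Finset.subset_univ s) ?_).symm
    intro x _ hx
    have : d x = 0 := by by_contra h; exact hx ((hmem x).2 h)
    simp [this]
  have hone : 1 ≤ s.card := by
    obtain ⟨i, hi⟩ := hdne
    exact Finset.card_pos.2 ⟨i, (hmem i).2 hi⟩
  have hm : (0:ℤ) < 2*(n:ℤ)+1 := by positivity
  have hc12 : s.card = 1 ∨ s.card = 2 := by omega
  obtain ⟨k, hk⟩ := hdvd
  rcases hc12 with h1c | h2c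
  · -- card = 1
    obtain ⟨i, hi⟩ := Finset.card_eq_one.1 h1c
    have hdi : d i ≠ 0 := (hmem i).1 (by simp [hi])
    have hsing : ∑ j ∈ s, d j * α j = d i * α i := by rw [hi, Finset.sum_singleton]
    have hnat : (d i).natAbs ≤ 2 := by
      have : ∑ j ∈ s, (d j).natAbs ≤ ∑ j, (d j).natAbs :=
        Finset.sum_le_sum_of_subset (Finset.subset_univ s)
      rw [hi, Finset.sum_singleton] at this
      omega
    have hai := hrange i
    have hk' : d i * α i = (2*(n:ℤ)+1) * k := by rw [← hsing, ← hsumeq, hk]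
    have hdi4 : d i = 1 ∨ d i = -1 ∨ d i = 2 ∨ d i = -2 := by omega
    rcases hdi4 with h | h | h | h <;>
    · rw [h] at hk'
      rcases key_mult _ k _ hm hk' (by omega) (by omega) with h' | h' | h' <;> omega
  · -- card = 2
    obtain ⟨i, j, hij, hij2⟩ := Finset.card_eq_two.1 h2c
    have hdi : d i ≠ 0 := (hmem i).1 (by simp [hij2])
    have hdj : d j ≠ 0 := (hmem j).1 (by simp [hij2])
    have hpair : ∑ x ∈ s, d x * α x = d i * α i + d j * α j := by
      rw [hij2, Finset.sum_pair hij]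
    have hnat : (d i).natAbs + (d j).natAbs ≤ 2 := by
      have : ∑ x ∈ s, (d x).natAbs ≤ ∑ x, (d x).natAbs :=
        Finset.sum_le_sum_of_subset (Finset.subset_univ s)
      rw [hij2, Finset.sum_pair hij] at this
      omega
    have hai := hrange i
    have haj := hrange j
    have hane : α i ≠ α j := fun h => hij (hinj h)
    have hsij := hsum i j
    have hk' : d i * α i + d j * α j = (2*(n:ℤ)+1) * k := by
      rw [← hpair, ← hsumeq, hk]
    have hdi2 : d i = 1 ∨ d i = -1 := by omega
    have hdj2 : d j = 1 ∨ d j = -1 := by omega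
    rcases hdi2 with h | h <;> rcases hdj2 with h' | h' <;>
    · rw [h, h'] at hk'
      rcases key_mult _ k _ hm hk' (by omega) (by omega) with h'' | h'' | h'' <;> omega
end

section
/- Let alpha satisfy: entries are nonzero distinct elements of {1,...,2n}, and alpha_i + alpha_j != 2n+1 for all i,j. If e in Z^n has ||e|| = 1 with e_j = epsilon in {+1,-1} at its unique nonzero position j, then (e·alpha) MOD (2n+1) equals alpha_j if epsilon = 1 and 2n+1-alpha_j if epsilon = -1; moreover, these 2n values (over all j and both signs) are distinct and nonzero, so the syndrome uniquely determines the error position and sign. -/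
/-- For `α` with nonzero distinct entries in `{1,…,2n}` and `α_i + α_j ≠ 2n+1`:
if `e` is the vector with `ε ∈ {1,-1}` at position `j` and zero elsewhere, then
`(e·α) MOD (2n+1)` equals `α_j` if `ε = 1` and `2n+1-α_j` if `ε = -1`; moreover
these `2n` values are nonzero and pairwise distinct (over all positions and signs),
so the syndrome determines the error position and sign. -/
theorem single_error_syndrome (n : ℕ) (α : Fin n → ℤ)
    (hrange : ∀ i, 1 ≤ α i ∧ α i ≤ 2 * n)
    (hinj : Function.Injective α)
    (hsum : ∀ i j, α i + α j ≠ 2 * n + 1) :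
    (∀ (j : Fin n) (ε : ℤ), (ε = 1 ∨ ε = -1) →
      (∑ i, (if i = j then ε else 0) * α i) % (2 * n + 1) =
        (if ε = 1 then α j else 2 * n + 1 - α j)) ∧
    (∀ (j : Fin n) (ε : ℤ), (ε = 1 ∨ ε = -1) →
      (if ε = 1 then α j else 2 * n + 1 - α j) ≠ 0) ∧
    (∀ (j1 j2 : Fin n) (ε1 ε2 : ℤ), (ε1 = 1 ∨ ε1 = -1) → (ε2 = 1 ∨ ε2 = -1) →
      (if ε1 = 1 then α j1 else 2 * n + 1 - α j1) =
        (if ε2 = 1 then α j2 else 2 * n + 1 - α j2) →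
      j1 = j2 ∧ ε1 = ε2) := by
  have hN : (0:ℤ) < 2 * n + 1 := by positivity
  refine ⟨?_, ?_, ?_⟩
  · intro j ε hε
    have hs : (∑ i, (if i = j then ε else 0) * α i) = ε * α j := by
      rw [Finset.sum_eq_single j]
      · simp
      · intro b _ hb; simp [hb]
      · simp
    rw [hs]
    obtain ⟨h1, h2⟩ := hrange j
    rcases hε with rfl | rfl
    · simp only [if_pos rfl, one_mul]
      exact Int.emod_eq_of_lt (by linarith) (by linarith)
    · norm_num
      have : -α j = (2 * (n:ℤ) + 1 - α j) + (-1) * (2 * n + 1) := by ring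
      rw [this, Int.add_mul_emod_self_right]
      exact Int.emod_eq_of_lt (by linarith) (by linarith)
  · intro j ε hε
    obtain ⟨h1, h2⟩ := hrange j
    rcases hε with rfl | rfl <;> simp <;> intro h <;> linarith
  · intro j1 j2 ε1 ε2 h1 h2 heq
    obtain ⟨a1, b1⟩ := hrange j1
    obtain ⟨a2, b2⟩ := hrange j2
    rcases h1 with rfl | rfl <;> rcases h2 with rfl | rfl <;> simp at heq ⊢
    · exact hinj heq
    · exact absurd (by linarith : α j1 + α j2 = 2 * n + 1) (hsum j1 j2)
    · exact absurd (by linarith : α j1 + α j2 = 2 * n + 1) (hsum j1 j2)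
    · exact hinj (by linarith)
end

section
/- Let alpha satisfy conditions (i)-(ii) (entries are nonzero distinct elements of {1,...,2n_1} with alpha_i + alpha_j != 2n_1+1 = p for a prime p = 2n_1+1 > 3), and let C_2 be a set of integer vectors c = (c_0,...,c_{n-1}) of length n = n_1 + m + 1 satisfying: (1) sum_{j<n_1} c_j alpha_j ≡ 0 (mod p); (2) sum_{j<n_1} c_j alpha_j^3 ≡ sum_{j<m} c_{n_1+j} q^j (mod p); (3) sum_{j<m+1} c_{n_1+j} ≡ 0 (mod 2). Suppose moreover that the Berlekamp code with locators alpha and tau=2 has minimum Lee distance at least 5. Then any two codewords of C_2 with distinct n_1-prefixes are at L1-distance at least 5. -/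
/-- Lee weight of the residue of `t` modulo `p` is at most `|t|`. -/
lemma lee_le_natAbs (p : ℕ) [NeZero p] (t : ℤ) :
    min ((t : ZMod p)).val (p - ((t : ZMod p)).val) ≤ t.natAbs := by
  have hvlt : ((t : ZMod p)).val < p := ZMod.val_lt _
  rcases lt_or_ge t.natAbs p with h | h
  · rcases Int.natAbs_eq t with ht | ht
    · have : ((t : ZMod p)).val = t.natAbs := by
        conv_lhs => rw [ht]
        rw [Int.cast_natCast, ZMod.val_natCast_of_lt h]
      omega
    · by_cases h0 : (t : ZMod p) = 0
      · simp [h0]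
      · have hneg : ((-(t : ZMod p))).val = p - ((t : ZMod p)).val := by
          rw [ZMod.neg_val]
          simp [h0]
        have hcast : (-(t : ZMod p)) = ((t.natAbs : ℕ) : ZMod p) := by
          conv_lhs => rw [← Int.cast_neg, ht, neg_neg, Int.cast_natCast]
        have : ((-(t : ZMod p))).val = t.natAbs := by
          rw [hcast, ZMod.val_natCast_of_lt h]
        omega
  · omega

set_option maxHeartbeats 1000000 in
/-- Let `p = 2n₁+1 > 3` be prime, `q ≥ 2`, `m = ⌈log_q p⌉`, `n = n₁ + m + 1`, and let
`α` have nonzero distinct entries in `{1,…,2n₁}` with `α_i + α_j ≠ p`.  Let `C₂` be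
a set of integer vectors of length `n` satisfying the three parity congruences
(1) `∑_{j<n₁} c_j α_j ≡ 0 (mod p)`,
(2) `∑_{j<n₁} c_j α_j³ ≡ ∑_{j<m} c_{n₁+j} q^j (mod p)`,
(3) `∑_{j<m+1} c_{n₁+j} ≡ 0 (mod 2)`.
If the Berlekamp code with locators `α` and `τ = 2` has minimum Lee distance at
least 5, then any two codewords of `C₂` with distinct `n₁`-prefixes are at
`L₁`-distance at least 5. -/
theorem double_error_min_distance (n1 m q n : ℕ) (hq : 2 ≤ q)
    (hp : (2 * n1 + 1).Prime) (hp3 : 3 < 2 * n1 + 1)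
    (hm : m = Nat.clog q (2 * n1 + 1)) (hn : n = n1 + m + 1)
    (α : Fin n1 → ℤ)
    (hrange : ∀ i, 1 ≤ α i ∧ α i ≤ 2 * n1)
    (hinj : Function.Injective α)
    (hsum : ∀ i j, α i + α j ≠ 2 * n1 + 1)
    (hBer : ∀ x : Fin n1 → ZMod (2 * n1 + 1), x ≠ 0 →
      (∑ j, x j * ((α j : ZMod (2 * n1 + 1)))) = 0 →
      (∑ j, x j * ((α j : ZMod (2 * n1 + 1))) ^ 3) = 0 →
      5 ≤ ∑ j, min (x j).val (2 * n1 + 1 - (x j).val))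
    (C2 : Set (Fin n → ℤ))
    (hC2 : ∀ c ∈ C2,
      ((2 * (n1 : ℤ) + 1) ∣ ∑ j : Fin n1, c ⟨j, by omega⟩ * α j) ∧
      ((2 * (n1 : ℤ) + 1) ∣
        (∑ j : Fin n1, c ⟨j, by omega⟩ * (α j) ^ 3) -
          ∑ j : Fin m, c ⟨n1 + j, by omega⟩ * (q : ℤ) ^ (j : ℕ)) ∧
      ((2 : ℤ) ∣ ∑ j : Fin (m + 1), c ⟨n1 + j, by omega⟩))
    (c1 c2 : Fin n → ℤ) (h1 : c1 ∈ C2) (h2 : c2 ∈ C2)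
    (hpre : ∃ j : Fin n1, c1 ⟨j, by omega⟩ ≠ c2 ⟨j, by omega⟩) :
    5 ≤ ∑ j, (c1 j - c2 j).natAbs := by
  haveI : NeZero (2 * n1 + 1) := ⟨by omega⟩
  haveI : Fact (Nat.Prime (2 * n1 + 1)) := ⟨hp⟩
  subst hn
  -- small, clean index-inclusion proofs (avoid `omega` in types)
  have emb1 : ∀ j : Fin n1, (j : ℕ) < n1 + m + 1 :=
    fun j => Nat.lt_of_lt_of_le j.2 (Nat.le_add_right n1 (m + 1))
  have emb2 : ∀ j : Fin (m + 1), n1 + (j : ℕ) < n1 + m + 1 :=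
    fun j => Nat.add_lt_add_left j.2 n1
  have emb3 : ∀ j : Fin m, n1 + (j : ℕ) < n1 + m + 1 :=
    fun j => Nat.add_lt_add_left (Nat.lt_succ_of_lt j.2) n1
  obtain ⟨d, hd⟩ : ∃ d : Fin (n1 + m + 1) → ℤ, ∀ j, d j = c1 j - c2 j := ⟨_, fun _ => rfl⟩
  obtain ⟨hA1, hB1, hP1⟩ := hC2 c1 h1
  obtain ⟨hA2, hB2, hP2⟩ := hC2 c2 h2
  -- basic integer facts about α mod p
  have hdvd_zero : ∀ a : ℤ, ((2 * n1 + 1 : ℕ) : ℤ) ∣ a → |a| < 2 * (n1 : ℤ) + 1 → a = 0 := by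
    intro a hdvd habs
    by_contra h0
    have := Int.le_of_dvd (abs_pos.mpr h0) ((dvd_abs _ _).mpr hdvd)
    push_cast at this
    omega
  have hAnz : ∀ i : Fin n1, ((α i : ℤ) : ZMod (2 * n1 + 1)) ≠ 0 := by
    intro i h
    have hdvd := (ZMod.intCast_zmod_eq_zero_iff_dvd _ _).mp h
    have hb := hrange i
    have := hdvd_zero _ hdvd (by rw [abs_of_pos (by omega)]; omega)
    omega
  have hAne : ∀ i j : Fin n1, i ≠ j →
      ((α i : ℤ) : ZMod (2 * n1 + 1)) ≠ ((α j : ℤ) : ZMod (2 * n1 + 1)) := by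
    intro i j hij h
    have h0 : ((α i - α j : ℤ) : ZMod (2 * n1 + 1)) = 0 := by push_cast; rw [h]; ring
    have hdvd := (ZMod.intCast_zmod_eq_zero_iff_dvd _ _).mp h0
    have hbi := hrange i; have hbj := hrange j
    have := hdvd_zero _ hdvd (by rw [abs_lt]; constructor <;> omega)
    exact hij (hinj (by omega))
  have hAns : ∀ i j : Fin n1,
      ((α i : ℤ) : ZMod (2 * n1 + 1)) + ((α j : ℤ) : ZMod (2 * n1 + 1)) ≠ 0 := by
    intro i j h
    have h0 : ((α i + α j - (2 * n1 + 1) : ℤ) : ZMod (2 * n1 + 1)) = 0 := by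
      have hps : ((2 * n1 + 1 : ℕ) : ZMod (2 * n1 + 1)) = 0 := ZMod.natCast_self _
      push_cast at hps ⊢
      linear_combination h - hps
    have hdvd := (ZMod.intCast_zmod_eq_zero_iff_dvd _ _).mp h0
    have hbi := hrange i; have hbj := hrange j
    have := hdvd_zero _ hdvd (by rw [abs_lt]; constructor <;> omega)
    exact hsum i j (by omega)
  -- the prefix difference vector in ZMod p
  obtain ⟨x, hx⟩ : ∃ x : Fin n1 → ZMod (2 * n1 + 1),
      ∀ j, x j = ((d ⟨j, emb1 j⟩ : ℤ) : ZMod (2 * n1 + 1)) := ⟨_, fun _ => rfl⟩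
  -- syndrome 1
  have hdiv1 : (2 * (n1 : ℤ) + 1) ∣ ∑ j : Fin n1, d ⟨j, emb1 j⟩ * α j := by
    have h := dvd_sub hA1 hA2
    have e : (∑ j : Fin n1, c1 ⟨j, emb1 j⟩ * α j) - ∑ j : Fin n1, c2 ⟨j, emb1 j⟩ * α j
        = ∑ j : Fin n1, d ⟨j, emb1 j⟩ * α j := by
      rw [← Finset.sum_sub_distrib]
      exact Finset.sum_congr rfl fun j _ => by rw [hd]; ring
    rwa [e] at h
  have hsyn1 : (∑ j, x j * ((α j : ZMod (2 * n1 + 1)))) = 0 := by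
    have h0 : ((∑ j : Fin n1, d ⟨j, emb1 j⟩ * α j : ℤ) : ZMod (2 * n1 + 1)) = 0 := by
      rw [ZMod.intCast_zmod_eq_zero_iff_dvd]
      exact_mod_cast hdiv1
    push_cast at h0
    simp only [hx]
    exact h0
  -- parity of suffix
  have hdiv3 : (2 : ℤ) ∣ ∑ j : Fin (m + 1), d ⟨n1 + j, emb2 j⟩ := by
    have h := dvd_sub hP1 hP2
    have e : (∑ j : Fin (m+1), c1 ⟨n1 + j, emb2 j⟩) - ∑ j : Fin (m+1), c2 ⟨n1 + j, emb2 j⟩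
        = ∑ j : Fin (m+1), d ⟨n1 + j, emb2 j⟩ := by
      rw [← Finset.sum_sub_distrib]
      exact Finset.sum_congr rfl fun j _ => (hd _).symm
    rwa [e] at h
  -- Lee weight per coordinate bounds natAbs
  have hlee : ∀ j : Fin n1, min (x j).val (2 * n1 + 1 - (x j).val) ≤ (d ⟨j, emb1 j⟩).natAbs := by
    intro j
    rw [hx]
    exact lee_le_natAbs (2 * n1 + 1) _
  -- splitting the total sum
  have hsplit : (∑ j, (c1 j - c2 j).natAbs)
      = (∑ j : Fin n1, (d ⟨j, emb1 j⟩).natAbs)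
        + ∑ j : Fin (m + 1), (d ⟨n1 + j, emb2 j⟩).natAbs := by
    have h := Fin.sum_univ_add (f := fun j : Fin (n1 + (m + 1)) => (d j).natAbs)
    have h1 : (∑ j, (c1 j - c2 j).natAbs) = ∑ j : Fin (n1 + (m + 1)), (d j).natAbs :=
      Finset.sum_congr rfl fun j _ => by rw [hd]
    rw [h1, h]
    congr 1
  by_cases hx0 : x = 0
  · -- some prefix entry is a nonzero multiple of p
    obtain ⟨j, hj⟩ := hpre
    have hxj : ((d ⟨j, emb1 j⟩ : ℤ) : ZMod (2 * n1 + 1)) = 0 := by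
      rw [← hx]; exact congrFun hx0 j
    have hdvd := (ZMod.intCast_zmod_eq_zero_iff_dvd _ _).mp hxj
    have hne : d ⟨j, emb1 j⟩ ≠ 0 := by
      rw [hd]
      exact sub_ne_zero.mpr hj
    have hge := Int.le_of_dvd (abs_pos.mpr hne) ((dvd_abs _ _).mpr hdvd)
    have hge5 : 5 ≤ (d ⟨j, emb1 j⟩).natAbs := by
      have h' : (2 * (n1 : ℤ) + 1) ≤ ((d ⟨j, emb1 j⟩).natAbs : ℤ) := by
        rw [← Int.abs_eq_natAbs]
        exact_mod_cast hge
      omega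
    have hterm : (d ⟨j, emb1 j⟩).natAbs ≤ ∑ j : Fin n1, (d ⟨j, emb1 j⟩).natAbs :=
      Finset.single_le_sum (f := fun j : Fin n1 => (d ⟨j, emb1 j⟩).natAbs)
        (fun _ _ => Nat.zero_le _) (Finset.mem_univ j)
    have key : 5 ≤ ∑ j : Fin n1, (d ⟨j, emb1 j⟩).natAbs := le_trans hge5 hterm
    rw [hsplit]
    omega
  · -- the prefix Lee weight is at least 3
    have hx3 : 3 ≤ ∑ j, min (x j).val (2 * n1 + 1 - (x j).val) := by
      obtain ⟨Lee, hLee⟩ : ∃ L : Fin n1 → ℕ,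
          ∀ k, L k = min (x k).val (2 * n1 + 1 - (x k).val) := ⟨_, fun _ => rfl⟩
      have hsumL : (∑ j, min (x j).val (2 * n1 + 1 - (x j).val)) = ∑ j, Lee j :=
        Finset.sum_congr rfl fun j _ => (hLee j).symm
      rw [hsumL]
      by_contra hlt
      push_neg at hlt
      have hpos : ∀ k, x k ≠ 0 → 1 ≤ Lee k := by
        intro k hk
        have h1 : (x k).val ≠ 0 := fun h => hk ((ZMod.val_eq_zero _).mp h)
        have h2 : (x k).val < 2 * n1 + 1 := ZMod.val_lt _
        rw [hLee]
        omega
      obtain ⟨i, hi⟩ : ∃ i, x i ≠ 0 := by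
        by_contra h; push_neg at h; exact hx0 (funext h)
      have hone : ∀ k, Lee k = 1 → x k = 1 ∨ x k = -1 := by
        intro k hk
        rw [hLee] at hk
        have h2 : (x k).val < 2 * n1 + 1 := ZMod.val_lt _
        have hself : (((x k).val : ℕ) : ZMod (2 * n1 + 1)) = x k :=
          ZMod.natCast_rightInverse (x k)
        have hv : (x k).val = 1 ∨ (x k).val = 2 * n1 := by omega
        rcases hv with h | h
        · left; rw [← hself, h]; norm_num
        · right
          rw [← hself, h]
          have hps : ((2 * n1 + 1 : ℕ) : ZMod (2 * n1 + 1)) = 0 := ZMod.natCast_self _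
          push_cast at hps ⊢
          linear_combination hps
      by_cases hj : ∃ k, k ≠ i ∧ x k ≠ 0
      · obtain ⟨j, hji, hjne⟩ := hj
        have hij : i ≠ j := fun h => hji h.symm
        have h2le : Lee i + Lee j ≤ ∑ k, Lee k := by
          have h := Finset.sum_le_sum_of_subset
            (f := Lee) (Finset.subset_univ ({i, j} : Finset (Fin n1)))
          rwa [Finset.sum_pair hij] at h
        have hLi : Lee i = 1 ∧ Lee j = 1 := by
          have := hpos i hi; have := hpos j hjne; omega
        have hrest : ∀ k, k ≠ i → k ≠ j → x k = 0 := by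
          intro k hki hkj
          by_contra hk
          have hins : k ∉ ({i, j} : Finset (Fin n1)) := by simp [hki, hkj]
          have h3 := Finset.sum_le_sum_of_subset
            (f := Lee) (Finset.subset_univ (insert k ({i, j} : Finset (Fin n1))))
          rw [Finset.sum_insert hins, Finset.sum_pair hij] at h3
          have := hpos k hk; omega
        have hsum2 : x i * ((α i : ℤ) : ZMod (2 * n1 + 1))
            + x j * ((α j : ℤ) : ZMod (2 * n1 + 1)) = 0 := by
          have hzero : ∑ k ∈ ({i, j} : Finset (Fin n1)), x k * ((α k : ℤ) : ZMod (2 * n1 + 1))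
              = ∑ k, x k * ((α k : ℤ) : ZMod (2 * n1 + 1)) := by
            refine Finset.sum_subset (Finset.subset_univ _) ?_
            intro k _ hk
            simp only [Finset.mem_insert, Finset.mem_singleton, not_or] at hk
            rw [hrest k hk.1 hk.2, zero_mul]
          rw [Finset.sum_pair hij] at hzero
          rw [hzero, hsyn1]
        rcases hone i hLi.1 with hxi | hxi <;> rcases hone j hLi.2 with hxj | hxj <;>
          rw [hxi, hxj] at hsum2
        · exact hAns i j (by linear_combination hsum2)
        · exact hAne i j hij (by linear_combination hsum2)
        · exact hAne j i (Ne.symm hij) (by linear_combination hsum2)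
        · exact hAns i j (by linear_combination -hsum2)
      · push_neg at hj
        have hsingle : x i * ((α i : ℤ) : ZMod (2 * n1 + 1)) = 0 := by
          have h : (∑ k, x k * ((α k : ℤ) : ZMod (2 * n1 + 1)))
              = x i * ((α i : ℤ) : ZMod (2 * n1 + 1)) :=
            Fintype.sum_eq_single i (fun k hk => by
              show x k * ((α k : ℤ) : ZMod (2 * n1 + 1)) = 0
              rw [hj k hk, zero_mul])
          rw [← h]
          exact hsyn1
        rcases mul_eq_zero.mp hsingle with h | h
        · exact hi h
        · exact hAnz i h
    have hPref : 3 ≤ ∑ j : Fin n1, (d ⟨j, emb1 j⟩).natAbs :=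
      le_trans hx3 (Finset.sum_le_sum fun j _ => hlee j)
    by_cases hz : ∀ j : Fin m, d ⟨n1 + j, emb3 j⟩ = 0
    · -- suffix check part is zero, so cube syndrome vanishes: use the Berlekamp bound
      have hdiv2 : (2 * (n1 : ℤ) + 1) ∣ ∑ j : Fin n1, d ⟨j, emb1 j⟩ * (α j) ^ 3 := by
        have h := dvd_sub hB1 hB2
        have e : ((∑ j : Fin n1, c1 ⟨j, emb1 j⟩ * (α j) ^ 3) -
              ∑ j : Fin m, c1 ⟨n1 + j, emb3 j⟩ * (q : ℤ) ^ (j : ℕ)) -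
            ((∑ j : Fin n1, c2 ⟨j, emb1 j⟩ * (α j) ^ 3) -
              ∑ j : Fin m, c2 ⟨n1 + j, emb3 j⟩ * (q : ℤ) ^ (j : ℕ))
            = (∑ j : Fin n1, d ⟨j, emb1 j⟩ * (α j) ^ 3) -
              ∑ j : Fin m, d ⟨n1 + j, emb3 j⟩ * (q : ℤ) ^ (j : ℕ) := by
          rw [sub_sub_sub_comm, ← Finset.sum_sub_distrib, ← Finset.sum_sub_distrib]
          congr 1
          · exact Finset.sum_congr rfl fun j _ => by rw [hd]; ring
          · exact Finset.sum_congr rfl fun j _ => by rw [hd]; ring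
        rw [e] at h
        have hzq : ∑ j : Fin m, d ⟨n1 + j, emb3 j⟩ * (q : ℤ) ^ (j : ℕ) = 0 :=
          Finset.sum_eq_zero fun j _ => by rw [hz j, zero_mul]
        rwa [hzq, sub_zero] at h
      have hsyn3 : (∑ j, x j * ((α j : ZMod (2 * n1 + 1))) ^ 3) = 0 := by
        have h0 : ((∑ j : Fin n1, d ⟨j, emb1 j⟩ * (α j) ^ 3 : ℤ) : ZMod (2 * n1 + 1)) = 0 := by
          rw [ZMod.intCast_zmod_eq_zero_iff_dvd]
          exact_mod_cast hdiv2
        push_cast at h0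
        simp only [hx]
        exact h0
      have h5 := hBer x hx0 hsyn1 hsyn3
      have hPref5 : 5 ≤ ∑ j : Fin n1, (d ⟨j, emb1 j⟩).natAbs :=
        le_trans h5 (Finset.sum_le_sum fun j _ => hlee j)
      rw [hsplit]
      omega
    · -- some suffix entry nonzero; parity forces suffix weight ≥ 2
      push_neg at hz
      obtain ⟨j0, hj0⟩ := hz
      have hSuf1 : 1 ≤ ∑ j : Fin (m + 1), (d ⟨n1 + j, emb2 j⟩).natAbs := by
        have hterm := Finset.single_le_sum
          (f := fun j : Fin (m + 1) => (d ⟨n1 + j, emb2 j⟩).natAbs)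
          (fun _ _ => Nat.zero_le _) (Finset.mem_univ (⟨j0, Nat.lt_succ_of_lt j0.2⟩ : Fin (m+1)))
        have hterm2 : (d ⟨n1 + (j0 : ℕ), emb3 j0⟩).natAbs
            ≤ ∑ j : Fin (m + 1), (d ⟨n1 + j, emb2 j⟩).natAbs := hterm
        have hne : d ⟨n1 + (j0 : ℕ), emb3 j0⟩ ≠ 0 := hj0
        have : (d ⟨n1 + (j0 : ℕ), emb3 j0⟩).natAbs ≠ 0 := fun h => hne (Int.natAbs_eq_zero.mp h)
        omega
      have hSufEven : (2 : ℤ) ∣ ((∑ j : Fin (m + 1), (d ⟨n1 + j, emb2 j⟩).natAbs : ℕ) : ℤ) := by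
        have h1 : (2 : ℤ) ∣ ∑ j : Fin (m + 1),
            (((d ⟨n1 + j, emb2 j⟩).natAbs : ℤ) - d ⟨n1 + j, emb2 j⟩) := by
          refine Finset.dvd_sum fun j _ => ?_
          rcases Int.natAbs_eq (d ⟨n1 + j, emb2 j⟩) with h | h
          · rw [← h]; simp
          · rw [show ((d ⟨n1 + j, emb2 j⟩).natAbs : ℤ) - d ⟨n1 + j, emb2 j⟩
                = -2 * d ⟨n1 + j, emb2 j⟩ by omega]
            exact ⟨-d ⟨n1 + j, emb2 j⟩, by ring⟩
        have h2 := dvd_add h1 hdiv3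
        rw [Finset.sum_sub_distrib, sub_add_cancel] at h2
        rwa [Nat.cast_sum]
      have hSuf2 : 2 ≤ ∑ j : Fin (m + 1), (d ⟨n1 + j, emb2 j⟩).natAbs := by
        obtain ⟨k, hk⟩ := hSufEven
        omega
      rw [hsplit]
      omega
end

section
/- With lambda as defined (mapping Z^n to GF(p)^{ñ}, n = k + m(ñ-k), via base-q combination on the suffix blocks), for every e in Z^n the Hamming weight of lambda(e) is at most the Hamming weight of e. Moreover, if every entry of e has absolute value at most theta and p > 2*theta, then the first k entries of e are uniquely recoverable from the first k entries of lambda(e). -/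
/-- The map `λ : ℤ^n → GF(p)^ñ` (with `n = k + m(ñ-k)`): the first `k` coordinates
are reduced mod `p`, and coordinate `k+v` (for `v < ñ-k`) is
`(∑_{j<m} x_{k+v+j(ñ-k)} q^j) mod p`. -/
def lam (p q k m nt : ℕ) (x : Fin (k + m * (nt - k)) → ℤ) : Fin nt → ZMod p :=
  fun v =>
    if h : (v : ℕ) < k then
      ((x ⟨v, by omega⟩ : ℤ) : ZMod p)
    else
      ∑ j : Fin m,
        ((x ⟨k + ((v : ℕ) - k) + (j : ℕ) * (nt - k), by
            have hv := v.isLt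
            have hj := j.isLt
            have h1 : (v : ℕ) - k < nt - k := by omega
            have h2 : (j : ℕ) * (nt - k) + (nt - k) ≤ m * (nt - k) := by
              have := Nat.succ_le_of_lt hj
              calc (j : ℕ) * (nt - k) + (nt - k) = ((j : ℕ) + 1) * (nt - k) := by ring
                _ ≤ m * (nt - k) := Nat.mul_le_mul_right _ (by omega)
            omega⟩ : ℤ) : ZMod p) * (q : ZMod p) ^ (j : ℕ)

/-- The Hamming weight of `λ(e)` is at most the Hamming weight of `e`; moreover, if
all entries of `e` have absolute value at most `θ` and `p > 2θ`, then the first `k`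
entries of `e` are uniquely determined by the first `k` entries of `λ(e)`. -/
theorem lam_weight_and_recovery (p q k m nt θ : ℕ) (hp : p.Prime) (hk : k ≤ nt)
    (hθ : 2 * θ < p) :
    (∀ e : Fin (k + m * (nt - k)) → ℤ,
      (Finset.univ.filter fun v => lam p q k m nt e v ≠ 0).card ≤
        (Finset.univ.filter fun j => e j ≠ 0).card) ∧
    (∀ e1 e2 : Fin (k + m * (nt - k)) → ℤ,
      (∀ j, (e1 j).natAbs ≤ θ) → (∀ j, (e2 j).natAbs ≤ θ) →
      (∀ v : Fin nt, (v : ℕ) < k → lam p q k m nt e1 v = lam p q k m nt e2 v) →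
      ∀ j : Fin (k + m * (nt - k)), (j : ℕ) < k → e1 j = e2 j) := by
  classical
  constructor
  · intro e
    by_cases hn : k + m * (nt - k) = 0
    · -- every lam value is zero
      have hall : ∀ v : Fin nt, lam p q k m nt e v = 0 := by
        intro v
        have hk0 : k = 0 := by omega
        have hnk : ¬ ((v : ℕ) < k) := by omega
        unfold lam
        rw [dif_neg hnk]
        apply Finset.sum_eq_zero
        intro j _
        exfalso
        have hj := j.isLt
        have hv := v.isLt
        -- m * (nt - k) = 0 and j : Fin m, v : Fin nt
        have : nt - k = 0 := by
          rcases Nat.mul_eq_zero.mp (by omega : m * (nt - k) = 0) with h | h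
          · omega
          · exact h
        omega
      have : (Finset.univ.filter fun v => lam p q k m nt e v ≠ 0) = ∅ := by
        apply Finset.filter_eq_empty_iff.mpr
        intro v _
        simp [hall v]
      simp [this]
    · have hn' : 0 < k + m * (nt - k) := Nat.pos_of_ne_zero hn
      have hidx : ∀ (v : Fin nt) (j : Fin m), ¬ ((v:ℕ) < k) →
          k + ((v : ℕ) - k) + (j : ℕ) * (nt - k) < k + m * (nt - k) := by
        intro v j hv
        have hvlt := v.isLt
        have hj := j.isLt
        have h1 : (v : ℕ) - k < nt - k := by omega
        have h2 : (j : ℕ) * (nt - k) + (nt - k) ≤ m * (nt - k) := by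
          calc (j : ℕ) * (nt - k) + (nt - k) = ((j : ℕ) + 1) * (nt - k) := by ring
            _ ≤ m * (nt - k) := Nat.mul_le_mul_right _ (by omega)
        omega
      have hex : ∀ v : Fin nt, ∀ hv : ¬ ((v:ℕ) < k), lam p q k m nt e v ≠ 0 →
          ∃ j : Fin m, e ⟨k + ((v : ℕ) - k) + (j : ℕ) * (nt - k), hidx v j hv⟩ ≠ 0 := by
        intro v hv hne
        by_contra hno
        push_neg at hno
        apply hne
        unfold lam
        rw [dif_neg hv]
        apply Finset.sum_eq_zero
        intro j _
        rw [show (⟨k + ((v : ℕ) - k) + (j : ℕ) * (nt - k), by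
              have hvlt := v.isLt
              have hj := j.isLt
              have h1 : (v : ℕ) - k < nt - k := by omega
              have h2 : (j : ℕ) * (nt - k) + (nt - k) ≤ m * (nt - k) := by
                have := Nat.succ_le_of_lt hj
                calc (j : ℕ) * (nt - k) + (nt - k) = ((j : ℕ) + 1) * (nt - k) := by ring
                  _ ≤ m * (nt - k) := Nat.mul_le_mul_right _ (by omega)
              omega⟩ : Fin (k + m * (nt - k))) = ⟨k + ((v : ℕ) - k) + (j : ℕ) * (nt - k), hidx v j hv⟩ from rfl,
            hno j]
        simp
      set f : Fin nt → Fin (k + m * (nt - k)) := fun v =>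
        if h : (v : ℕ) < k then ⟨v, by omega⟩
        else if hx : ∃ j : Fin m, e ⟨k + ((v : ℕ) - k) + (j : ℕ) * (nt - k), hidx v j h⟩ ≠ 0
          then ⟨k + ((v : ℕ) - k) + (hx.choose : ℕ) * (nt - k), hidx v hx.choose h⟩
          else ⟨0, hn'⟩ with hf
      apply Finset.card_le_card_of_injOn f
      · intro v hv
        simp only [Finset.mem_coe, Finset.mem_filter, Finset.mem_univ, true_and] at hv ⊢
        by_cases h : (v : ℕ) < k
        · rw [hf]
          simp only [dif_pos h]
          intro h0
          apply hv
          unfold lam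
          rw [dif_pos h, h0]
          simp
        · obtain ⟨j, hj⟩ := hex v h hv
          rw [hf]
          simp only [dif_neg h]
          have hx : ∃ j : Fin m, e ⟨k + ((v : ℕ) - k) + (j : ℕ) * (nt - k), hidx v j h⟩ ≠ 0 :=
            ⟨j, hj⟩
          rw [dif_pos hx]
          exact hx.choose_spec
      · intro v1 hv1 v2 hv2 hfeq
        simp only [Finset.mem_coe, Finset.mem_filter, Finset.mem_univ, true_and] at hv1 hv2
        have hval : (f v1 : ℕ) = (f v2 : ℕ) := by rw [hfeq]
        have key : ∀ v : Fin nt, lam p q k m nt e v ≠ 0 →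
            ((v : ℕ) < k ∧ (f v : ℕ) = (v : ℕ)) ∨
            (¬ ((v : ℕ) < k) ∧ (v : ℕ) - k < nt - k ∧
              ∃ c : ℕ, (f v : ℕ) = k + ((v : ℕ) - k) + c * (nt - k)) := by
          intro v hvne
          by_cases h : (v : ℕ) < k
          · left
            refine ⟨h, ?_⟩
            rw [hf]; simp only [dif_pos h]
          · right
            have hvlt := v.isLt
            obtain ⟨j0, hj0⟩ := hex v h hvne
            have hx : ∃ j : Fin m, e ⟨k + ((v : ℕ) - k) + (j : ℕ) * (nt - k), hidx v j h⟩ ≠ 0 :=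
              ⟨j0, hj0⟩
            have hfv : (f v : ℕ) = k + ((v : ℕ) - k) + (hx.choose : ℕ) * (nt - k) := by
              rw [hf]; simp only [dif_neg h, dif_pos hx]
            have hd : 0 < nt - k := by
              have := hidx v j0 h
              rcases Nat.eq_zero_or_pos (nt - k) with h0 | h0
              · omega
              · exact h0
            exact ⟨h, by omega, hx.choose, hfv⟩
        rcases key v1 hv1 with ⟨ha1, hb1⟩ | ⟨ha1, hb1, c1, hc1⟩ <;>
          rcases key v2 hv2 with ⟨ha2, hb2⟩ | ⟨ha2, hb2, c2, hc2⟩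
        · exact Fin.ext (by omega)
        · omega
        · omega
        · have heq : ((v1 : ℕ) - k) + c1 * (nt - k) = ((v2 : ℕ) - k) + c2 * (nt - k) := by
            omega
          have e1 : (((v1 : ℕ) - k) + c1 * (nt - k)) % (nt - k) =
              (((v2 : ℕ) - k) + c2 * (nt - k)) % (nt - k) := by rw [heq]
          rw [Nat.add_mul_mod_self_right, Nat.add_mul_mod_self_right,
            Nat.mod_eq_of_lt hb1, Nat.mod_eq_of_lt hb2] at e1
          exact Fin.ext (by omega)
  · intro e1 e2 h1 h2 hlam j hj
    have hv : (j : ℕ) < nt := by omega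
    have := hlam ⟨(j : ℕ), hv⟩ hj
    unfold lam at this
    simp only [Fin.val_mk, dif_pos hj, Fin.eta] at this
    have hdvd : (p : ℤ) ∣ (e1 j - e2 j) := by
      rwa [← ZMod.intCast_zmod_eq_zero_iff_dvd, Int.cast_sub, sub_eq_zero]
    have h1j := h1 j
    have h2j := h2 j
    have := Int.eq_zero_of_dvd_of_natAbs_lt_natAbs hdvd (by
      simp only [Int.natAbs_natCast]
      omega)
    omega
end
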